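/- arXiv:2001.02244 — 5 statements merged into one kernel-verified Lean document; each statement's English description precedes it below -/
import Mathlib

section
/- Let A be an n×n real matrix, B an n×m real matrix, Q a symmetric positive semidefinite n×n real matrix, R a symmetric positive semidefinite m×m real matrix, and P a symmetric n×n real matrix such that R + BᵀPB is invertible and P satisfies the DARE, and let K = −(R + BᵀPB)⁻¹BᵀPA. Then for every x ∈ ℝⁿ, the value function V(x) = xᵀPx satisfies the Lyapunov decrease inequality V((A + BK)x) ≤ V(x) − xᵀQx along the closed-loop system x⁺ = (A + BK)x. -/
/-!
Write `S = R + BᵀPB` and `N = BᵀPA`, so that the gain is characterised by `S K = -N`.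
Expanding the closed-loop form, the cross term `KᵀN` cancels against `Kᵀ S K`, which leaves
`(A + BK)ᵀ P (A + BK) + Kᵀ R K = AᵀPA + AᵀPBK = AᵀPA - AᵀPB S⁻¹ N`, and by the DARE this is `P - Q`.
Hence `V((A + BK)x) = V(x) - xᵀQx - (Kx)ᵀR(Kx)`, and the last term is nonnegative since `R ⪰ 0`.
-/

open Matrix

namespace Matrix

variable {ι κ α : Type*} [Fintype ι] [Fintype κ]

theorem dotProduct_mulVec_mulVec_eq [CommSemiring α] (P : Matrix κ κ α) (T : Matrix κ ι α)
    (x : ι → α) : (T *ᵥ x) ⬝ᵥ P *ᵥ (T *ᵥ x) = x ⬝ᵥ (Tᵀ * P * T) *ᵥ x := by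
  simp only [← mulVec_mulVec, dotProduct_mulVec, vecMul_transpose]

variable [CommRing α]

omit [Fintype ι] in
theorem mul_neg_nonsing_inv_mul [DecidableEq κ] {S : Matrix κ κ α} (N : Matrix κ ι α)
    (hS : IsUnit S) : S * -(S⁻¹ * N) = -N := by
  rw [Matrix.mul_neg, mul_nonsing_inv_cancel_left _ _ ((isUnit_iff_isUnit_det _).mp hS)]

theorem transpose_mul_mul_add_of_mul_eq_neg {A P : Matrix ι ι α} {B : Matrix ι κ α}
    {R : Matrix κ κ α} {K : Matrix κ ι α} (hK : (R + Bᵀ * P * B) * K = -(Bᵀ * P * A)) :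
    (A + B * K)ᵀ * P * (A + B * K) + Kᵀ * R * K = Aᵀ * P * A + Aᵀ * P * B * K :=
  calc (A + B * K)ᵀ * P * (A + B * K) + Kᵀ * R * K
      = Aᵀ * P * A + Aᵀ * P * B * K + (Kᵀ * (Bᵀ * P * A) + Kᵀ * ((R + Bᵀ * P * B) * K)) := by
        simp only [transpose_add, transpose_mul, Matrix.add_mul, Matrix.mul_add, Matrix.mul_assoc]
        abel
    _ = Aᵀ * P * A + Aᵀ * P * B * K := by
        rw [hK, Matrix.mul_neg, add_neg_cancel, add_zero]

theorem closedLoop_transpose_mul_mul_of_dare [DecidableEq κ] {A P Q : Matrix ι ι α}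
    {B : Matrix ι κ α} {R : Matrix κ κ α} {K : Matrix κ ι α}
    (hS : IsUnit (R + Bᵀ * P * B))
    (hDARE : P = Aᵀ * P * A - Aᵀ * P * B * (R + Bᵀ * P * B)⁻¹ * (Bᵀ * P * A) + Q)
    (hK : K = -((R + Bᵀ * P * B)⁻¹ * (Bᵀ * P * A))) :
    (A + B * K)ᵀ * P * (A + B * K) = P - Q - Kᵀ * R * K := by
  have hSK : (R + Bᵀ * P * B) * K = -(Bᵀ * P * A) := hK ▸ mul_neg_nonsing_inv_mul _ hS
  rw [eq_sub_iff_add_eq, transpose_mul_mul_add_of_mul_eq_neg hSK, hK]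
  conv_rhs => rw [hDARE]
  simp only [Matrix.mul_neg, Matrix.mul_assoc]
  abel

end Matrix

theorem dare_lyapunov_decrease_general {n m : ℕ}
    (A : Matrix (Fin n) (Fin n) ℝ) (B : Matrix (Fin n) (Fin m) ℝ)
    (Q P : Matrix (Fin n) (Fin n) ℝ) (R : Matrix (Fin m) (Fin m) ℝ)
    (hR : R.PosSemidef)
    (hinv : IsUnit (R + Bᵀ * P * B))
    (hDARE : P = Aᵀ * P * A - Aᵀ * P * B * (R + Bᵀ * P * B)⁻¹ * (Bᵀ * P * A) + Q)
    (K : Matrix (Fin m) (Fin n) ℝ)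
    (hK : K = -((R + Bᵀ * P * B)⁻¹ * (Bᵀ * P * A))) :
    ∀ x : Fin n → ℝ,
      ((A + B * K).mulVec x) ⬝ᵥ P.mulVec ((A + B * K).mulVec x) ≤
        x ⬝ᵥ P.mulVec x - x ⬝ᵥ Q.mulVec x := by
  intro x
  have hRK : 0 ≤ x ⬝ᵥ (Kᵀ * R * K) *ᵥ x := by
    rw [← dotProduct_mulVec_mulVec_eq]
    exact hR.dotProduct_mulVec_nonneg (K *ᵥ x)
  rw [dotProduct_mulVec_mulVec_eq, closedLoop_transpose_mul_mul_of_dare hinv hDARE hK,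
    sub_mulVec, sub_mulVec, dotProduct_sub, dotProduct_sub]
  linarith

theorem dare_lyapunov_decrease {n m : ℕ}
    (A : Matrix (Fin n) (Fin n) ℝ) (B : Matrix (Fin n) (Fin m) ℝ)
    (Q P : Matrix (Fin n) (Fin n) ℝ) (R : Matrix (Fin m) (Fin m) ℝ)
    (hQ : Q.PosSemidef) (hR : R.PosSemidef) (hP : P.IsSymm)
    (hinv : IsUnit (R + Bᵀ * P * B))
    (hDARE : P = Aᵀ * P * A - Aᵀ * P * B * (R + Bᵀ * P * B)⁻¹ * (Bᵀ * P * A) + Q)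
    (K : Matrix (Fin m) (Fin n) ℝ)
    (hK : K = -((R + Bᵀ * P * B)⁻¹ * (Bᵀ * P * A))) :
    ∀ x : Fin n → ℝ,
      ((A + B * K).mulVec x) ⬝ᵥ P.mulVec ((A + B * K).mulVec x) ≤
        x ⬝ᵥ P.mulVec x - x ⬝ᵥ Q.mulVec x :=
  dare_lyapunov_decrease_general A B Q P R hR hinv hDARE K hK
end

section
/- Let A, B, Q, R, P be real matrices with Q, R, P symmetric, M₃ = R + BᵀPB invertible, P satisfying the DARE, and K = −(R + BᵀPB)⁻¹BᵀPA. Fix N ≥ 1, an initial state x₀ ∈ ℝⁿ, and any control sequence u₀, …, u_{N−1} ∈ ℝᵐ, and let the predicted trajectory be x̂₀ = x₀, x̂_{k+1} = A x̂_k + B u_k. Then the finite-horizon cost with terminal cost P satisfies the exact telescoping identity ∑_{k=0}^{N−1} (x̂_kᵀ Q x̂_k + u_kᵀ R u_k) + x̂_Nᵀ P x̂_N = x₀ᵀ P x₀ + ∑_{k=0}^{N−1} (u_k − K x̂_k)ᵀ M₃ (u_k − K x̂_k). Consequently, if M₃ is positive semidefinite, the cost is at least x₀ᵀPx₀ for every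 control sequence, with equality when u_k = K x̂_k for all k; i.e., the finite-horizon problem with terminal cost P is infinite-horizon optimal for every horizon N. -/
/-!
Completing the square with the gain `K` turns one step of the dynamics into the exact identity
`xᵀQx + vᵀRv + (Ax + Bv)ᵀP(Ax + Bv) = xᵀPx + (v - Kx)ᵀ(R + BᵀPB)(v - Kx)`:
the cross terms cancel because `(R + BᵀPB)K = -BᵀPA`, and the remaining terms in `x` cancel
because the DARE reads `P = AᵀPA + AᵀPBK + Q` in terms of `K`. Summing along the trajectory,
the values `x̂ₖᵀPx̂ₖ` telescope.
-/

open Matrix Finset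

theorem Finset.sum_range_add_eq_add_sum_range {G : Type*} [AddCommMonoid G] {N : ℕ}
    (f g V : ℕ → G) (hstep : ∀ k < N, f k + V (k + 1) = V k + g k) :
    ∑ k ∈ range N, f k + V N = V 0 + ∑ k ∈ range N, g k := by
  induction N with
  | zero => simp
  | succ N ih =>
    rw [sum_range_succ, sum_range_succ, add_assoc, hstep N N.lt_succ_self, ← add_assoc,
      ih fun k hk => hstep k (Nat.lt_succ_of_lt hk), add_assoc]

namespace Matrix

theorem mul_eq_neg_of_eq_neg_nonsing_inv_mul {ι κ α : Type*} [Fintype κ] [DecidableEq κ]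
    [CommRing α] {M : Matrix κ κ α} {G K : Matrix κ ι α} (hM : IsUnit M)
    (hK : K = -(M⁻¹ * G)) : M * K = -G := by
  rw [hK, Matrix.mul_neg, mul_nonsing_inv_cancel_left M G ((isUnit_iff_isUnit_det M).mp hM)]

variable {ι κ α : Type*} [Fintype ι] [Fintype κ]

theorem mulVec_dotProduct [CommSemiring α] (C : Matrix ι κ α) (x : κ → α) (z : ι → α) :
    (C *ᵥ x) ⬝ᵥ z = x ⬝ᵥ Cᵀ *ᵥ z := by
  rw [dotProduct_comm, dotProduct_transpose_mulVec]

section CommRing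

variable [CommRing α] {A : Matrix ι ι α} {B : Matrix ι κ α} {Q P : Matrix ι ι α}
  {R : Matrix κ κ α} {K : Matrix κ ι α}

theorem riccati_step_eq (hR : R.IsSymm) (hP : P.IsSymm)
    (hgain : (R + Bᵀ * P * B) * K = -(Bᵀ * P * A))
    (hriccati : P = Aᵀ * P * A + Aᵀ * P * B * K + Q) (x : ι → α) (v : κ → α) :
    x ⬝ᵥ Q *ᵥ x + v ⬝ᵥ R *ᵥ v + (A *ᵥ x + B *ᵥ v) ⬝ᵥ P *ᵥ (A *ᵥ x + B *ᵥ v) =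
      x ⬝ᵥ P *ᵥ x + (v - K *ᵥ x) ⬝ᵥ (R + Bᵀ * P * B) *ᵥ (v - K *ᵥ x) := by
  set M := R + Bᵀ * P * B
  have hM : Mᵀ = M := by
    simp only [M, transpose_add, transpose_mul, transpose_transpose, hR.eq, hP.eq,
      Matrix.mul_assoc]
  have hgain' : Kᵀ * M = -(Aᵀ * P * B) := by
    simpa only [transpose_mul, transpose_neg, hM, transpose_transpose, hP.eq,
      Matrix.mul_assoc] using congrArg transpose hgain
  have hcost : (A *ᵥ x + B *ᵥ v) ⬝ᵥ P *ᵥ (A *ᵥ x + B *ᵥ v) = x ⬝ᵥ (Aᵀ * P * A) *ᵥ x +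
      x ⬝ᵥ (Aᵀ * P * B) *ᵥ v + v ⬝ᵥ (Bᵀ * P * A) *ᵥ x + v ⬝ᵥ (Bᵀ * P * B) *ᵥ v := by
    simp only [mulVec_add, dotProduct_add, add_dotProduct, mulVec_dotProduct, mulVec_mulVec,
      Matrix.mul_assoc]
    ring
  have hsquare : (v - K *ᵥ x) ⬝ᵥ M *ᵥ (v - K *ᵥ x) = v ⬝ᵥ M *ᵥ v - v ⬝ᵥ (M * K) *ᵥ x -
      x ⬝ᵥ (Kᵀ * M) *ᵥ v + x ⬝ᵥ (Kᵀ * M * K) *ᵥ x := by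
    simp only [mulVec_sub, dotProduct_sub, sub_dotProduct, mulVec_dotProduct, mulVec_mulVec,
      Matrix.mul_assoc]
    ring
  have hvalue : x ⬝ᵥ P *ᵥ x = x ⬝ᵥ (Aᵀ * P * A) *ᵥ x + x ⬝ᵥ (Aᵀ * P * B * K) *ᵥ x +
      x ⬝ᵥ Q *ᵥ x := by
    conv_lhs => rw [hriccati]
    simp only [add_mulVec, dotProduct_add]
  rw [hcost, hsquare, hvalue, hgain, hgain', Matrix.neg_mul]
  simp only [M, neg_mulVec, dotProduct_neg, add_mulVec, dotProduct_add]
  ring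

theorem finite_horizon_cost_eq (hR : R.IsSymm) (hP : P.IsSymm)
    (hgain : (R + Bᵀ * P * B) * K = -(Bᵀ * P * A))
    (hriccati : P = Aᵀ * P * A + Aᵀ * P * B * K + Q) {N : ℕ} (u : ℕ → κ → α)
    (x : ℕ → ι → α) (hdyn : ∀ k < N, x (k + 1) = A *ᵥ x k + B *ᵥ u k) :
    ∑ k ∈ range N, (x k ⬝ᵥ Q *ᵥ x k + u k ⬝ᵥ R *ᵥ u k) + x N ⬝ᵥ P *ᵥ x N =
      x 0 ⬝ᵥ P *ᵥ x 0 +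
        ∑ k ∈ range N, (u k - K *ᵥ x k) ⬝ᵥ (R + Bᵀ * P * B) *ᵥ (u k - K *ᵥ x k) :=
  sum_range_add_eq_add_sum_range _ _ (fun k => x k ⬝ᵥ P *ᵥ x k) fun k hk => by
    rw [hdyn k hk]
    exact riccati_step_eq hR hP hgain hriccati (x k) (u k)

theorem dare_eq_gain_form [DecidableEq κ]
    (hDARE : P = Aᵀ * P * A - Aᵀ * P * B * (R + Bᵀ * P * B)⁻¹ * (Bᵀ * P * A) + Q)
    (hK : K = -((R + Bᵀ * P * B)⁻¹ * (Bᵀ * P * A))) :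
    P = Aᵀ * P * A + Aᵀ * P * B * K + Q := by
  rw [hK, Matrix.mul_neg, ← Matrix.mul_assoc, ← sub_eq_add_neg]
  exact hDARE

end CommRing

end Matrix

theorem dare_finite_horizon_telescoping_general {n m : ℕ}
    (A : Matrix (Fin n) (Fin n) ℝ) (B : Matrix (Fin n) (Fin m) ℝ)
    (Q P : Matrix (Fin n) (Fin n) ℝ) (R : Matrix (Fin m) (Fin m) ℝ)
    (hR : R.IsSymm) (hP : P.IsSymm)
    (hinv : IsUnit (R + Bᵀ * P * B))
    (hDARE : P = Aᵀ * P * A - Aᵀ * P * B * (R + Bᵀ * P * B)⁻¹ * (Bᵀ * P * A) + Q)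
    (K : Matrix (Fin m) (Fin n) ℝ)
    (hK : K = -((R + Bᵀ * P * B)⁻¹ * (Bᵀ * P * A)))
    (N : ℕ) (x₀ : Fin n → ℝ)
    (u : ℕ → Fin m → ℝ) (xhat : ℕ → Fin n → ℝ)
    (hx0 : xhat 0 = x₀)
    (hdyn : ∀ k < N, xhat (k + 1) = A.mulVec (xhat k) + B.mulVec (u k)) :
    (∑ k ∈ range N, (xhat k ⬝ᵥ Q.mulVec (xhat k) + u k ⬝ᵥ R.mulVec (u k)) +
        xhat N ⬝ᵥ P.mulVec (xhat N) =
      x₀ ⬝ᵥ P.mulVec x₀ +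
        ∑ k ∈ range N,
          (u k - K.mulVec (xhat k)) ⬝ᵥ
            (R + Bᵀ * P * B).mulVec (u k - K.mulVec (xhat k))) ∧
    ((R + Bᵀ * P * B).PosSemidef →
      (x₀ ⬝ᵥ P.mulVec x₀ ≤
        ∑ k ∈ range N, (xhat k ⬝ᵥ Q.mulVec (xhat k) + u k ⬝ᵥ R.mulVec (u k)) +
          xhat N ⬝ᵥ P.mulVec (xhat N)) ∧
      ((∀ k < N, u k = K.mulVec (xhat k)) →
        ∑ k ∈ range N, (xhat k ⬝ᵥ Q.mulVec (xhat k) + u k ⬝ᵥ R.mulVec (u k)) +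
            xhat N ⬝ᵥ P.mulVec (xhat N) =
          x₀ ⬝ᵥ P.mulVec x₀)) := by
  have hcost := hx0 ▸ finite_horizon_cost_eq hR hP (mul_eq_neg_of_eq_neg_nonsing_inv_mul hinv hK)
    (dare_eq_gain_form hDARE hK) u xhat hdyn
  refine ⟨hcost, fun hM => ⟨?_, fun hopt => ?_⟩⟩
  · rw [hcost]
    exact le_add_of_nonneg_right <| sum_nonneg fun k _ => by
      simpa only [star_trivial] using hM.dotProduct_mulVec_nonneg (u k - K *ᵥ xhat k)
  · rw [hcost, sum_eq_zero fun k hk => by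
      rw [hopt k (mem_range.mp hk), sub_self, mulVec_zero, dotProduct_zero], add_zero]

theorem dare_finite_horizon_telescoping {n m : ℕ}
    (A : Matrix (Fin n) (Fin n) ℝ) (B : Matrix (Fin n) (Fin m) ℝ)
    (Q P : Matrix (Fin n) (Fin n) ℝ) (R : Matrix (Fin m) (Fin m) ℝ)
    (hQ : Q.IsSymm) (hR : R.IsSymm) (hP : P.IsSymm)
    (hinv : IsUnit (R + Bᵀ * P * B))
    (hDARE : P = Aᵀ * P * A - Aᵀ * P * B * (R + Bᵀ * P * B)⁻¹ * (Bᵀ * P * A) + Q)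
    (K : Matrix (Fin m) (Fin n) ℝ)
    (hK : K = -((R + Bᵀ * P * B)⁻¹ * (Bᵀ * P * A)))
    (N : ℕ) (hN : 1 ≤ N) (x₀ : Fin n → ℝ)
    (u : ℕ → Fin m → ℝ) (xhat : ℕ → Fin n → ℝ)
    (hx0 : xhat 0 = x₀)
    (hdyn : ∀ k < N, xhat (k + 1) = A.mulVec (xhat k) + B.mulVec (u k)) :
    (∑ k ∈ range N, (xhat k ⬝ᵥ Q.mulVec (xhat k) + u k ⬝ᵥ R.mulVec (u k)) +
        xhat N ⬝ᵥ P.mulVec (xhat N) =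
      x₀ ⬝ᵥ P.mulVec x₀ +
        ∑ k ∈ range N,
          (u k - K.mulVec (xhat k)) ⬝ᵥ
            (R + Bᵀ * P * B).mulVec (u k - K.mulVec (xhat k))) ∧
    ((R + Bᵀ * P * B).PosSemidef →
      (x₀ ⬝ᵥ P.mulVec x₀ ≤
        ∑ k ∈ range N, (xhat k ⬝ᵥ Q.mulVec (xhat k) + u k ⬝ᵥ R.mulVec (u k)) +
          xhat N ⬝ᵥ P.mulVec (xhat N)) ∧
      ((∀ k < N, u k = K.mulVec (xhat k)) →
        ∑ k ∈ range N, (xhat k ⬝ᵥ Q.mulVec (xhat k) + u k ⬝ᵥ R.mulVec (u k)) +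
            xhat N ⬝ᵥ P.mulVec (xhat N) =
          x₀ ⬝ᵥ P.mulVec x₀)) :=
  dare_finite_horizon_telescoping_general A B Q P R hR hP hinv hDARE K hK N x₀ u xhat hx0 hdyn
end

section
/- Let A be an n×n real matrix, B an n×m real matrix, Q a symmetric positive definite n×n real matrix, R a symmetric positive semidefinite m×m real matrix, and P a symmetric positive definite n×n real matrix such that R + BᵀPB is invertible and P satisfies the DARE, and let K = −(R + BᵀPB)⁻¹BᵀPA. Then the closed-loop system is asymptotically stable: for every x₀ ∈ ℝⁿ, (A + BK)ᵗ x₀ → 0 as t → ∞. -/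
/-!
Completing the square turns the DARE into the Lyapunov identity
`P - (A + BK)ᵀ P (A + BK) - Q = Kᵀ R K ⪰ 0`, so along a closed-loop trajectory `xₜ` the
value `xₜᵀ P xₜ ≥ 0` drops by at least `xₜᵀ Q xₜ` at each step. Hence `∑ₜ xₜᵀ Q xₜ ≤ x₀ᵀ P x₀`,
the terms `xₜᵀ Q xₜ` tend to zero, and since `Q` is positive definite (so `xᵀ Q x ≥ c ‖x‖²`),
`xₜ → 0`.
-/

open Matrix Filter

open scoped Topology

open Finset in
theorem tendsto_zero_of_nonneg_of_add_le {a w : ℕ → ℝ} (ha : ∀ t, 0 ≤ a t) (hw : ∀ t, 0 ≤ w t)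
    (hstep : ∀ t, a (t + 1) + w t ≤ a t) : Tendsto w atTop (𝓝 0) := by
  have htelescope : ∀ N, ∑ t ∈ range N, w t + a N ≤ a 0 := by
    intro N
    induction N with
    | zero => simp
    | succ N ih => rw [sum_range_succ]; linarith [hstep N]
  exact (summable_of_sum_range_le hw fun N => by linarith [htelescope N, ha N]).tendsto_atTop_zero

namespace Matrix

variable {ι : Type*} [Fintype ι]

theorem dotProduct_transpose_mul_mul_mulVec (M P : Matrix ι ι ℝ) (x : ι → ℝ) :
    x ⬝ᵥ (Mᵀ * P * M) *ᵥ x = (M *ᵥ x) ⬝ᵥ P *ᵥ (M *ᵥ x) := by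
  rw [← mulVec_mulVec, ← mulVec_mulVec, dotProduct_mulVec, vecMul_transpose]

theorem PosDef.exists_pos_mul_sq_norm_le {M : Matrix ι ι ℝ} (hM : M.PosDef) :
    ∃ c > 0, ∀ x : ι → ℝ, c * ‖x‖ ^ 2 ≤ x ⬝ᵥ M *ᵥ x := by
  have hcont : Continuous fun x : ι → ℝ => x ⬝ᵥ M *ᵥ x :=
    continuous_id.dotProduct (continuous_const.matrix_mulVec continuous_id)
  obtain ⟨c, hc, hsphere⟩ := (isCompact_sphere (0 : ι → ℝ) 1).exists_forall_le'
    hcont.continuousOn (a := 0) fun u hu => by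
      simpa using hM.dotProduct_mulVec_pos (ne_zero_of_mem_unit_sphere ⟨u, hu⟩)
  refine ⟨c, hc, fun x => ?_⟩
  rcases eq_or_ne x 0 with rfl | hx
  · simp
  have hxnorm : ‖x‖ ≠ 0 := norm_ne_zero_iff.mpr hx
  have hu := hsphere (‖x‖⁻¹ • x) (by simp [norm_smul, hxnorm])
  have hhom : (‖x‖⁻¹ • x) ⬝ᵥ M *ᵥ (‖x‖⁻¹ • x) = (‖x‖ ^ 2)⁻¹ * (x ⬝ᵥ M *ᵥ x) := by
    simp only [mulVec_smul, dotProduct_smul, smul_dotProduct, smul_eq_mul]; ring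
  rw [hhom, le_inv_mul_iff₀ (by positivity), mul_comm] at hu
  exact hu

theorem PosDef.tendsto_zero_of_tendsto_dotProduct_mulVec {M : Matrix ι ι ℝ} (hM : M.PosDef)
    {α : Type*} {l : Filter α} {x : α → ι → ℝ}
    (hx : Tendsto (fun s => x s ⬝ᵥ M *ᵥ x s) l (𝓝 0)) : Tendsto x l (𝓝 0) := by
  obtain ⟨c, hc, hle⟩ := hM.exists_pos_mul_sq_norm_le
  have hsq : Tendsto (fun s => ‖x s‖ ^ 2) l (𝓝 0) :=
    squeeze_zero (fun _ => sq_nonneg _) (fun s => (le_inv_mul_iff₀ hc).mpr (hle (x s)))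
      (by simpa using hx.const_mul c⁻¹)
  refine tendsto_zero_iff_norm_tendsto_zero.mpr ?_
  simpa [Real.sqrt_sq (norm_nonneg _)] using hsq.sqrt

theorem tendsto_pow_mulVec_zero_of_lyapunov [DecidableEq ι] {M P Q : Matrix ι ι ℝ}
    (hP : P.PosSemidef) (hQ : Q.PosDef) (hlyap : (P - Mᵀ * P * M - Q).PosSemidef) (x : ι → ℝ) :
    Tendsto (fun t : ℕ => (M ^ t) *ᵥ x) atTop (𝓝 0) := by
  refine hQ.tendsto_zero_of_tendsto_dotProduct_mulVec
    (tendsto_zero_of_nonneg_of_add_le (a := fun t => (M ^ t *ᵥ x) ⬝ᵥ P *ᵥ (M ^ t *ᵥ x))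
      (fun t => by simpa using hP.dotProduct_mulVec_nonneg (M ^ t *ᵥ x))
      (fun t => by simpa using hQ.posSemidef.dotProduct_mulVec_nonneg (M ^ t *ᵥ x))
      fun t => ?_)
  have hdecrease := hlyap.dotProduct_mulVec_nonneg (M ^ t *ᵥ x)
  simp only [star_trivial, sub_mulVec, dotProduct_sub, dotProduct_transpose_mul_mul_mulVec]
    at hdecrease
  simp only [pow_succ', ← mulVec_mulVec]
  linarith

end Matrix

theorem dare_closed_loop_lyapunov_eq {ι κ 𝕜 : Type*} [Fintype ι] [Fintype κ] [DecidableEq κ]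
    [CommRing 𝕜] {A P Q : Matrix ι ι 𝕜} {B : Matrix ι κ 𝕜} {R : Matrix κ κ 𝕜}
    {K : Matrix κ ι 𝕜} (hinv : IsUnit (R + Bᵀ * P * B))
    (hDARE : P = Aᵀ * P * A - Aᵀ * P * B * (R + Bᵀ * P * B)⁻¹ * (Bᵀ * P * A) + Q)
    (hK : K = -((R + Bᵀ * P * B)⁻¹ * (Bᵀ * P * A))) :
    P - (A + B * K)ᵀ * P * (A + B * K) - Q = Kᵀ * R * K := by
  have hgain : (R + Bᵀ * P * B) * K = -(Bᵀ * P * A) := by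
    rw [hK, Matrix.mul_neg,
      mul_nonsing_inv_cancel_left _ _ ((isUnit_iff_isUnit_det _).mp hinv)]
  have hPQ : P - Q = Aᵀ * P * A + Aᵀ * P * B * K := by
    nth_rewrite 1 [hDARE]
    rw [hK]
    simp only [Matrix.mul_neg, Matrix.mul_assoc]
    abel
  have hcross : Kᵀ * R * K + Kᵀ * (Bᵀ * P * B) * K = -(Kᵀ * (Bᵀ * P * A)) := by
    rw [Matrix.mul_assoc, Matrix.mul_assoc, ← Matrix.mul_add, ← Matrix.add_mul, hgain,
      Matrix.mul_neg]
  rw [sub_right_comm, hPQ, transpose_add, transpose_mul, eq_sub_of_add_eq hcross]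
  simp only [Matrix.add_mul, Matrix.mul_add, Matrix.mul_assoc]
  abel

theorem dare_closed_loop_asymptotically_stable {n m : ℕ}
    (A : Matrix (Fin n) (Fin n) ℝ) (B : Matrix (Fin n) (Fin m) ℝ)
    (Q P : Matrix (Fin n) (Fin n) ℝ) (R : Matrix (Fin m) (Fin m) ℝ)
    (hQ : Q.PosDef) (hR : R.PosSemidef) (hP : P.PosDef)
    (hinv : IsUnit (R + Bᵀ * P * B))
    (hDARE : P = Aᵀ * P * A - Aᵀ * P * B * (R + Bᵀ * P * B)⁻¹ * (Bᵀ * P * A) + Q)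
    (K : Matrix (Fin m) (Fin n) ℝ)
    (hK : K = -((R + Bᵀ * P * B)⁻¹ * (Bᵀ * P * A))) :
    ∀ x₀ : Fin n → ℝ,
      Tendsto (fun t : ℕ => ((A + B * K) ^ t).mulVec x₀) atTop (nhds 0) := by
  refine tendsto_pow_mulVec_zero_of_lyapunov hP.posSemidef hQ ?_
  rw [dare_closed_loop_lyapunov_eq hinv hDARE hK]
  simpa using hR.conjTranspose_mul_mul_same K
end

section
/- Let A, B, Q, R be real matrices with Q, R symmetric. Suppose P₁ and P₂ are symmetric n×n real matrices, each satisfying the DARE with R + BᵀP_iB invertible, and let K_i = −(R + BᵀP_iB)⁻¹BᵀP_iA be the associated gains. If both closed-loop matrices are stable, in the sense that (A + BK₁)ᵗ → 0 and (A + BK₂)ᵗ → 0 as t → ∞, then P₁ = P₂; i.e., the stabilizing solution of the DARE is unique. -/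
open Matrix Filter

theorem dare_stabilizing_solution_unique {n m : ℕ}
    (A : Matrix (Fin n) (Fin n) ℝ) (B : Matrix (Fin n) (Fin m) ℝ)
    (Q : Matrix (Fin n) (Fin n) ℝ) (R : Matrix (Fin m) (Fin m) ℝ)
    (hQ : Q.IsSymm) (hR : R.IsSymm)
    (P₁ P₂ : Matrix (Fin n) (Fin n) ℝ)
    (hP₁ : P₁.IsSymm) (hP₂ : P₂.IsSymm)
    (hinv₁ : IsUnit (R + Bᵀ * P₁ * B)) (hinv₂ : IsUnit (R + Bᵀ * P₂ * B))
    (hDARE₁ : P₁ = Aᵀ * P₁ * A - Aᵀ * P₁ * B * (R + Bᵀ * P₁ * B)⁻¹ * (Bᵀ * P₁ * A) + Q)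
    (hDARE₂ : P₂ = Aᵀ * P₂ * A - Aᵀ * P₂ * B * (R + Bᵀ * P₂ * B)⁻¹ * (Bᵀ * P₂ * A) + Q)
    (K₁ K₂ : Matrix (Fin m) (Fin n) ℝ)
    (hK₁ : K₁ = -((R + Bᵀ * P₁ * B)⁻¹ * (Bᵀ * P₁ * A)))
    (hK₂ : K₂ = -((R + Bᵀ * P₂ * B)⁻¹ * (Bᵀ * P₂ * A)))
    (hstab₁ : Tendsto (fun t : ℕ => (A + B * K₁) ^ t) atTop (nhds 0))
    (hstab₂ : Tendsto (fun t : ℕ => (A + B * K₂) ^ t) atTop (nhds 0)) :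
    P₁ = P₂ := by
  set S₁ := R + Bᵀ * P₁ * B with hS₁
  set S₂ := R + Bᵀ * P₂ * B with hS₂
  set F₁ := A + B * K₁ with hF₁
  set F₂ := A + B * K₂ with hF₂
  have hdet₁ : IsUnit S₁.det := (Matrix.isUnit_iff_isUnit_det _).mp hinv₁
  have hdet₂ : IsUnit S₂.det := (Matrix.isUnit_iff_isUnit_det _).mp hinv₂
  have hS₁T : S₁ᵀ = S₁ := by
    rw [hS₁]
    simp only [Matrix.transpose_add, Matrix.transpose_mul, Matrix.transpose_transpose,
      hR.eq, hP₁.eq, Matrix.mul_assoc]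
  have hS₂T : S₂ᵀ = S₂ := by
    rw [hS₂]
    simp only [Matrix.transpose_add, Matrix.transpose_mul, Matrix.transpose_transpose,
      hR.eq, hP₂.eq, Matrix.mul_assoc]
  have hK₁T : K₁ᵀ = -(Aᵀ * (P₁ * (B * S₁⁻¹))) := by
    rw [hK₁]
    simp only [Matrix.transpose_neg, Matrix.transpose_mul, Matrix.transpose_transpose,
      Matrix.transpose_nonsing_inv, hS₁T, hP₁.eq, Matrix.mul_assoc]
  have hK₂T : K₂ᵀ = -(Aᵀ * (P₂ * (B * S₂⁻¹))) := by
    rw [hK₂]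
    simp only [Matrix.transpose_neg, Matrix.transpose_mul, Matrix.transpose_transpose,
      Matrix.transpose_nonsing_inv, hS₂T, hP₂.eq, Matrix.mul_assoc]
  have hD1 : P₁ - Q = Aᵀ * (P₁ * A) + -(Aᵀ * (P₁ * (B * (S₁⁻¹ * (Bᵀ * (P₁ * A)))))) := by
    conv_lhs => rw [hDARE₁]
    simp only [Matrix.mul_assoc]
    abel
  have hD2 : P₂ - Q = Aᵀ * (P₂ * A) + -(Aᵀ * (P₂ * (B * (S₂⁻¹ * (Bᵀ * (P₂ * A)))))) := by
    conv_lhs => rw [hDARE₂]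
    simp only [Matrix.mul_assoc]
    abel
  have h1 : F₁ᵀ * (P₁ * A) = P₁ - Q := by
    rw [hF₁, hD1]
    simp only [Matrix.transpose_add, Matrix.transpose_mul, Matrix.add_mul, hK₁T,
      Matrix.neg_mul, Matrix.mul_assoc]
  have h2 : Aᵀ * (P₂ * F₂) = P₂ - Q := by
    rw [hF₂, hD2, hK₂]
    simp only [Matrix.mul_add, Matrix.mul_neg, Matrix.mul_assoc]
  have hKS₁ : K₁ᵀ * S₁ = -(Aᵀ * (P₁ * B)) := by
    rw [hK₁T]
    simp only [Matrix.neg_mul, Matrix.mul_assoc, Matrix.nonsing_inv_mul _ hdet₁,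
      Matrix.mul_one]
  have hSK₂ : S₂ * K₂ = -(Bᵀ * (P₂ * A)) := by
    rw [hK₂, Matrix.mul_neg, Matrix.mul_nonsing_inv_cancel_left _ _ hdet₂]
    simp only [Matrix.mul_assoc]
  have hRr₁ : R = S₁ - Bᵀ * (P₁ * B) := by
    rw [hS₁]; simp only [Matrix.mul_assoc]; abel
  have hRr₂ : R = S₂ - Bᵀ * (P₂ * B) := by
    rw [hS₂]; simp only [Matrix.mul_assoc]; abel
  have h3 : F₁ᵀ * (P₁ * B) = -(K₁ᵀ * R) := by
    conv_rhs => rw [hRr₁]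
    rw [hF₁, Matrix.mul_sub, hKS₁]
    simp only [Matrix.transpose_add, Matrix.transpose_mul, Matrix.add_mul, Matrix.mul_assoc]
    abel
  have h4 : Bᵀ * (P₂ * F₂) = -(R * K₂) := by
    conv_rhs => rw [hRr₂]
    rw [hF₂, Matrix.sub_mul, hSK₂]
    simp only [Matrix.mul_add, Matrix.mul_assoc]
    abel
  have h3K : F₁ᵀ * (P₁ * (B * K₂)) = -(K₁ᵀ * (R * K₂)) := by
    have h := congrArg (· * K₂) h3
    simp only [Matrix.neg_mul, Matrix.mul_assoc] at h
    exact h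
  have h4K : K₁ᵀ * (Bᵀ * (P₂ * F₂)) = -(K₁ᵀ * (R * K₂)) := by
    rw [h4, Matrix.mul_neg]
  have e1 : F₁ᵀ * (P₁ * F₂) = P₁ - Q + -(K₁ᵀ * (R * K₂)) := by
    conv_lhs => rw [hF₂]
    simp only [Matrix.mul_add]
    rw [h1, h3K]
  have e2 : F₁ᵀ * (P₂ * F₂) = P₂ - Q + -(K₁ᵀ * (R * K₂)) := by
    conv_lhs => rw [hF₁]
    simp only [Matrix.transpose_add, Matrix.transpose_mul, Matrix.add_mul, Matrix.mul_assoc]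
    rw [h2, h4K]
  have key : P₁ - P₂ = F₁ᵀ * (P₁ - P₂) * F₂ := by
    simp only [Matrix.mul_sub, Matrix.sub_mul, Matrix.mul_assoc]
    rw [e1, e2]
    abel
  have iter : ∀ t : ℕ, P₁ - P₂ = (F₁ᵀ) ^ t * (P₁ - P₂) * F₂ ^ t := by
    intro t
    induction t with
    | zero => simp
    | succ t ih =>
      rw [pow_succ' (F₁ᵀ), pow_succ F₂]
      calc P₁ - P₂ = F₁ᵀ * (P₁ - P₂) * F₂ := key
      _ = F₁ᵀ * ((F₁ᵀ) ^ t * (P₁ - P₂) * F₂ ^ t) * F₂ := by rw [← ih]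
      _ = F₁ᵀ * (F₁ᵀ) ^ t * (P₁ - P₂) * (F₂ ^ t * F₂) := by
          simp only [Matrix.mul_assoc]
  have hT : Tendsto (fun t : ℕ => (F₁ᵀ) ^ t * (P₁ - P₂) * F₂ ^ t) atTop (nhds 0) := by
    have h1' : Tendsto (fun t : ℕ => (F₁ᵀ) ^ t) atTop (nhds 0) := by
      have : Tendsto (fun t : ℕ => (F₁ ^ t)ᵀ) atTop
          (nhds (0 : Matrix (Fin n) (Fin n) ℝ)ᵀ) :=
        ((Continuous.matrix_transpose continuous_id).tendsto 0).comp hstab₁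
      simpa [Matrix.transpose_pow] using this
    have := (h1'.mul (tendsto_const_nhds (x := P₁ - P₂))).mul hstab₂
    simpa using this
  have h0 : P₁ - P₂ = 0 := by
    refine tendsto_nhds_unique (f := fun t : ℕ => (F₁ᵀ) ^ t * (P₁ - P₂) * F₂ ^ t) ?_ hT
    simp only [← iter]
    exact tendsto_const_nhds
  exact sub_eq_zero.mp h0
end

section
/- Let A : ℝ → ℝ^{n×n}, B : ℝ → ℝ^{n×m}, Q : ℝ → ℝ^{n×n}, R : ℝ → ℝ^{m×m}, P : ℝ → ℝ^{n×n} be matrix-valued functions differentiable at t, with Q(τ), R(τ), P(τ) symmetric, M₃(τ) = R(τ) + B(τ)ᵀP(τ)B(τ) invertible for τ in a neighborhood of t, and suppose P(τ) satisfies the DARE determined by (A(τ), B(τ), Q(τ), R(τ)) for all τ in a neighborhood of t. Define at t: M₂ = M₃⁻¹, M₁ = P − PBM₂BᵀP, and Z₁ = I_{n²} − (Aᵀ ⊗ Aᵀ)[I_{n²} − (PBM₂Bᵀ ⊗ I_n) − (I_n ⊗ PBM₂Bᵀ) + (PB ⊗ PB)(M₂ ⊗ M₂)(Bᵀ ⊗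 Bᵀ)], Z₂ = (V_{n,n} + I_{n²})(I_n ⊗ AᵀM₁), Z₃ = (Aᵀ ⊗ Aᵀ)[(PB ⊗ PB)(M₂ ⊗ M₂)(I_{m²} + V_{m,m})(I_m ⊗ BᵀP) − (I_{n²} + V_{n,n})(PBM₂ ⊗ P)], Z₄ = I_{n²}, Z₅ = (Aᵀ ⊗ Aᵀ)(PB ⊗ PB)(M₂ ⊗ M₂). Then Z₁ vec(P′(t)) = Z₂ vec(A′(t)) + Z₃ vec(B′(t)) + Z₄ vec(Q′(t)) + Z₅ vec(R′(t)); if moreover Z₁ is invertible, then vec(P′(t)) = Z₁⁻¹[Z₂ vec(A′(t)) + Z₃ vec(B′(t)) + Z₄ vec(Q′(t)) + Z₅ vec(R′(t))]. -/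
open Matrix Filter
open scoped Kronecker Topology

/-- `vec` stacks the columns of a matrix into a vector, indexed by (column, row). -/
def vecM {p q : ℕ} (M : Matrix (Fin p) (Fin q) ℝ) : Fin q × Fin p → ℝ :=
  fun ji => M ji.2 ji.1

/-- The commutation matrix `V_{p,p}`, defined by `V vec X = vec Xᵀ`. -/
def commMatrix (p : ℕ) : Matrix (Fin p × Fin p) (Fin p × Fin p) ℝ :=
  Matrix.of fun a b => if a.1 = b.2 ∧ a.2 = b.1 then 1 else 0

/-- `M₂ = (R + BᵀPB)⁻¹`. -/
noncomputable def dareM₂ {n m : ℕ} (B : Matrix (Fin n) (Fin m) ℝ)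
    (P : Matrix (Fin n) (Fin n) ℝ) (R : Matrix (Fin m) (Fin m) ℝ) :
    Matrix (Fin m) (Fin m) ℝ := (R + Bᵀ * P * B)⁻¹

/-- `M₁ = P − PBM₂BᵀP`. -/
noncomputable def dareM₁ {n m : ℕ} (B : Matrix (Fin n) (Fin m) ℝ)
    (P : Matrix (Fin n) (Fin n) ℝ) (R : Matrix (Fin m) (Fin m) ℝ) :
    Matrix (Fin n) (Fin n) ℝ :=
  P - P * B * dareM₂ B P R * Bᵀ * P

/-- `Z₁ = I − (Aᵀ⊗Aᵀ)[I − (PBM₂Bᵀ⊗I) − (I⊗PBM₂Bᵀ) + (PB⊗PB)(M₂⊗M₂)(Bᵀ⊗Bᵀ)]`. -/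
noncomputable def dareZ₁ {n m : ℕ} (A : Matrix (Fin n) (Fin n) ℝ)
    (B : Matrix (Fin n) (Fin m) ℝ) (P : Matrix (Fin n) (Fin n) ℝ)
    (R : Matrix (Fin m) (Fin m) ℝ) : Matrix (Fin n × Fin n) (Fin n × Fin n) ℝ :=
  1 - (Aᵀ ⊗ₖ Aᵀ) *
    (1 - ((P * B * dareM₂ B P R * Bᵀ) ⊗ₖ (1 : Matrix (Fin n) (Fin n) ℝ))
       - ((1 : Matrix (Fin n) (Fin n) ℝ) ⊗ₖ (P * B * dareM₂ B P R * Bᵀ))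
       + ((P * B) ⊗ₖ (P * B)) * (dareM₂ B P R ⊗ₖ dareM₂ B P R) * (Bᵀ ⊗ₖ Bᵀ))

/-- `Z₂ = (V_{n,n} + I)(I ⊗ AᵀM₁)`. -/
noncomputable def dareZ₂ {n m : ℕ} (A : Matrix (Fin n) (Fin n) ℝ)
    (B : Matrix (Fin n) (Fin m) ℝ) (P : Matrix (Fin n) (Fin n) ℝ)
    (R : Matrix (Fin m) (Fin m) ℝ) : Matrix (Fin n × Fin n) (Fin n × Fin n) ℝ :=
  (commMatrix n + 1) * ((1 : Matrix (Fin n) (Fin n) ℝ) ⊗ₖ (Aᵀ * dareM₁ B P R))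

/-- `Z₃ = (Aᵀ⊗Aᵀ)[(PB⊗PB)(M₂⊗M₂)(I + V_{m,m})(I ⊗ BᵀP) − (I + V_{n,n})(PBM₂ ⊗ P)]`. -/
noncomputable def dareZ₃ {n m : ℕ} (A : Matrix (Fin n) (Fin n) ℝ)
    (B : Matrix (Fin n) (Fin m) ℝ) (P : Matrix (Fin n) (Fin n) ℝ)
    (R : Matrix (Fin m) (Fin m) ℝ) : Matrix (Fin n × Fin n) (Fin m × Fin n) ℝ :=
  (Aᵀ ⊗ₖ Aᵀ) *
    (((P * B) ⊗ₖ (P * B)) * (dareM₂ B P R ⊗ₖ dareM₂ B P R) *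
        (1 + commMatrix m) * ((1 : Matrix (Fin m) (Fin m) ℝ) ⊗ₖ (Bᵀ * P))
      - (1 + commMatrix n) * ((P * B * dareM₂ B P R) ⊗ₖ P))

/-- `Z₄ = I_{n²}`. -/
noncomputable def dareZ₄ (n : ℕ) : Matrix (Fin n × Fin n) (Fin n × Fin n) ℝ := 1

/-- `Z₅ = (Aᵀ⊗Aᵀ)(PB⊗PB)(M₂⊗M₂)`. -/
noncomputable def dareZ₅ {n m : ℕ} (A : Matrix (Fin n) (Fin n) ℝ)
    (B : Matrix (Fin n) (Fin m) ℝ) (P : Matrix (Fin n) (Fin n) ℝ)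
    (R : Matrix (Fin m) (Fin m) ℝ) : Matrix (Fin n × Fin n) (Fin m × Fin m) ℝ :=
  (Aᵀ ⊗ₖ Aᵀ) * ((P * B) ⊗ₖ (P * B)) * (dareM₂ B P R ⊗ₖ dareM₂ B P R)

/-! Differentiating the DARE entrywise expresses `P'` as the differential of the Riccati map
`(A, B, P, Q, R) ↦ AᵀPA − AᵀPBM₂BᵀPA + Q` in the direction `(A', B', P', Q', R')`, an equation
linear in the derivatives; the entries of `M₂ = (R + BᵀPB)⁻¹` are differentiable by Cramer's
rule, with derivative `−M₂ M₃' M₂`. Vectorizing with `vec (XYZ) = (Zᵀ ⊗ X) vec Y` and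
`V vec X = vec Xᵀ`, and using the symmetry of `P`, `R` (hence of `M₂` and `M₁`), turns every term
into one of the `Zᵢ`. In particular `Z₁` is the Stein operator `X ↦ X − A_clᵀ X A_cl` of the
closed-loop matrix `A_cl = (I − BM₂BᵀP)A`. -/

-- Matrices carry no global norm in Mathlib, so derivatives are taken entrywise.
def HasMatrixDerivAt {p q : ℕ} (f : ℝ → Matrix (Fin p) (Fin q) ℝ)
    (f' : Matrix (Fin p) (Fin q) ℝ) (t : ℝ) : Prop :=
  ∀ i j, HasDerivAt (fun τ => f τ i j) (f' i j) t

namespace HasMatrixDerivAt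

variable {p q r : ℕ} {f g : ℝ → Matrix (Fin p) (Fin q) ℝ} {f' g' : Matrix (Fin p) (Fin q) ℝ}
  {t : ℝ}

theorem add (hf : HasMatrixDerivAt f f' t) (hg : HasMatrixDerivAt g g' t) :
    HasMatrixDerivAt (fun τ => f τ + g τ) (f' + g') t :=
  fun i j => (hf i j).add (hg i j)

theorem sub (hf : HasMatrixDerivAt f f' t) (hg : HasMatrixDerivAt g g' t) :
    HasMatrixDerivAt (fun τ => f τ - g τ) (f' - g') t :=
  fun i j => (hf i j).sub (hg i j)

theorem transpose (hf : HasMatrixDerivAt f f' t) :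
    HasMatrixDerivAt (fun τ => (f τ)ᵀ) f'ᵀ t :=
  fun i j => hf j i

theorem mul {g : ℝ → Matrix (Fin q) (Fin r) ℝ} {g' : Matrix (Fin q) (Fin r) ℝ}
    (hf : HasMatrixDerivAt f f' t) (hg : HasMatrixDerivAt g g' t) :
    HasMatrixDerivAt (fun τ => f τ * g τ) (f' * g t + f t * g') t := fun i j => by
  simpa only [mul_apply, Matrix.add_apply, ← Finset.sum_add_distrib] using
    HasDerivAt.fun_sum fun k _ => (hf i k).fun_mul (hg k j)

theorem unique (hf : HasMatrixDerivAt f f' t) (hg : HasMatrixDerivAt g g' t)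
    (hfg : f =ᶠ[𝓝 t] g) : f' = g' := by
  ext i j
  have hfg_ij : (fun τ => f τ i j) =ᶠ[𝓝 t] fun τ => g τ i j :=
    hfg.mono fun τ hτ => congrFun (congrFun hτ i) j
  exact (hf i j).unique (hfg_ij.hasDerivAt_iff.mpr (hg i j))

end HasMatrixDerivAt

section Inverse

variable {p : ℕ} {f : ℝ → Matrix (Fin p) (Fin p) ℝ} {t : ℝ}

theorem differentiableAt_det (hf : ∀ i j, DifferentiableAt ℝ (fun τ => f τ i j) t) :
    DifferentiableAt ℝ (fun τ => (f τ).det) t := by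
  simp only [det_apply']
  exact DifferentiableAt.fun_sum fun σ _ =>
    (DifferentiableAt.fun_finsetProd fun i _ => hf (σ i) i).const_mul _

theorem differentiableAt_inv_apply (hf : ∀ i j, DifferentiableAt ℝ (fun τ => f τ i j) t)
    (hdet : (f t).det ≠ 0) (i j : Fin p) :
    DifferentiableAt ℝ (fun τ => (f τ)⁻¹ i j) t := by
  simp only [inv_def, Matrix.smul_apply, Ring.inverse_eq_inv', smul_eq_mul, Matrix.adjugate_apply]
  refine ((differentiableAt_det hf).inv hdet).mul (differentiableAt_det fun k l => ?_)
  by_cases hk : k = j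
  · simp [updateRow_apply, hk]
  · simpa [updateRow_apply, hk] using hf k l

/-- The derivative of `τ ↦ f τ⁻¹` is found by differentiating `f τ⁻¹ * f τ = 1`, once the entries
of `f τ⁻¹` are known to be differentiable (Cramer's rule). -/
theorem HasMatrixDerivAt.inv {f' : Matrix (Fin p) (Fin p) ℝ} (hf : HasMatrixDerivAt f f' t)
    (hunit : ∀ᶠ τ in 𝓝 t, IsUnit (f τ)) :
    HasMatrixDerivAt (fun τ => (f τ)⁻¹) (-((f t)⁻¹ * f' * (f t)⁻¹)) t := by
  have hdet : IsUnit (f t).det := (isUnit_iff_isUnit_det _).mp hunit.self_of_nhds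
  set D : Matrix (Fin p) (Fin p) ℝ := of fun i j => deriv (fun τ => (f τ)⁻¹ i j) t
  have hD : HasMatrixDerivAt (fun τ => (f τ)⁻¹) D t := fun i j =>
    (differentiableAt_inv_apply (fun i j => (hf i j).differentiableAt) hdet.ne_zero i j).hasDerivAt
  have hone : HasMatrixDerivAt (fun _ => (1 : Matrix (Fin p) (Fin p) ℝ)) 0 t :=
    fun i j => hasDerivAt_const t _
  have hinv_mul : (fun τ => (f τ)⁻¹ * f τ) =ᶠ[𝓝 t] fun _ => 1 :=
    hunit.mono fun τ hτ => nonsing_inv_mul _ ((isUnit_iff_isUnit_det _).mp hτ)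
  have hD_mul : D * f t = -((f t)⁻¹ * f') :=
    eq_neg_of_add_eq_zero_left ((hD.mul hf).unique hone hinv_mul)
  have hD_eq : D = -((f t)⁻¹ * f' * (f t)⁻¹) := by
    rw [← mul_nonsing_inv_cancel_right _ D hdet, hD_mul, neg_mul]
  exact hD_eq ▸ hD

end Inverse

theorem vecM_eq_vec {p q : ℕ} (X : Matrix (Fin p) (Fin q) ℝ) : vecM X = X.vec := rfl

theorem commMatrix_mulVec_vec {p : ℕ} (X : Matrix (Fin p) (Fin p) ℝ) :
    commMatrix p *ᵥ X.vec = Xᵀ.vec := by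
  ext ⟨j, i⟩
  simp [commMatrix, mulVec, dotProduct, Fintype.sum_prod_type, ite_and]

section Vectorization

variable {n m : ℕ} {a p : Matrix (Fin n) (Fin n) ℝ} {b : Matrix (Fin n) (Fin m) ℝ}
  {r : Matrix (Fin m) (Fin m) ℝ}

theorem dareM₂_transpose (hp : pᵀ = p) (hr : rᵀ = r) : (dareM₂ b p r)ᵀ = dareM₂ b p r := by
  rw [dareM₂, transpose_nonsing_inv, transpose_add, transpose_mul, transpose_mul,
    transpose_transpose, hp, hr, Matrix.mul_assoc]

theorem dareM₁_transpose (hp : pᵀ = p) (hr : rᵀ = r) : (dareM₁ b p r)ᵀ = dareM₁ b p r := by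
  simp only [dareM₁, transpose_sub, transpose_mul, transpose_transpose, hp,
    dareM₂_transpose hp hr, Matrix.mul_assoc]

theorem dareZ₁_mulVec_vecM (hp : pᵀ = p) (hr : rᵀ = r) (X : Matrix (Fin n) (Fin n) ℝ) :
    dareZ₁ a b p r *ᵥ vecM X =
      vecM (X - aᵀ * (1 - p * b * dareM₂ b p r * bᵀ) * X * (1 - b * dareM₂ b p r * bᵀ * p) * a) :=
    by
  simp only [vecM_eq_vec, dareZ₁, sub_mulVec, add_mulVec, one_mulVec, ← mulVec_mulVec,
    kronecker_mulVec_vec, ← vec_add, ← vec_sub]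
  congr 1
  simp only [transpose_transpose, transpose_mul, transpose_one, hp, dareM₂_transpose hp hr,
    Matrix.mul_sub, Matrix.sub_mul, Matrix.mul_add, Matrix.add_mul, Matrix.mul_one,
    Matrix.one_mul, Matrix.mul_assoc]
  abel

theorem dareZ₂_mulVec_vecM (hp : pᵀ = p) (hr : rᵀ = r) (X : Matrix (Fin n) (Fin n) ℝ) :
    dareZ₂ a b p r *ᵥ vecM X = vecM (Xᵀ * dareM₁ b p r * a + aᵀ * dareM₁ b p r * X) := by
  simp only [vecM_eq_vec, dareZ₂, ← mulVec_mulVec, add_mulVec, one_mulVec, kronecker_mulVec_vec,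
    commMatrix_mulVec_vec, ← vec_add]
  simp only [transpose_one, Matrix.mul_one, transpose_mul, transpose_transpose,
    dareM₁_transpose hp hr, Matrix.mul_assoc]

theorem dareZ₃_mulVec_vecM (hp : pᵀ = p) (hr : rᵀ = r) (Y : Matrix (Fin n) (Fin m) ℝ) :
    dareZ₃ a b p r *ᵥ vecM Y =
      vecM (aᵀ * (p * b * dareM₂ b p r * (bᵀ * p * Y + Yᵀ * p * b) * dareM₂ b p r * bᵀ * p
        - p * Y * dareM₂ b p r * bᵀ * p - p * b * dareM₂ b p r * Yᵀ * p) * a) := by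
  simp only [vecM_eq_vec, dareZ₃, ← mulVec_mulVec, sub_mulVec, add_mulVec, one_mulVec,
    kronecker_mulVec_vec, commMatrix_mulVec_vec, ← vec_add, ← vec_sub]
  congr 1
  simp only [transpose_one, transpose_transpose, transpose_mul, hp,
    dareM₂_transpose hp hr, Matrix.mul_one, Matrix.mul_sub, Matrix.sub_mul, Matrix.mul_add,
    Matrix.add_mul, Matrix.mul_assoc]
  abel

theorem dareZ₅_mulVec_vecM (hp : pᵀ = p) (hr : rᵀ = r) (S : Matrix (Fin m) (Fin m) ℝ) :
    dareZ₅ a b p r *ᵥ vecM S =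
      vecM (aᵀ * p * b * dareM₂ b p r * S * dareM₂ b p r * bᵀ * p * a) := by
  simp only [vecM_eq_vec, dareZ₅, ← mulVec_mulVec, kronecker_mulVec_vec]
  simp only [transpose_transpose, transpose_mul, hp, dareM₂_transpose hp hr, Matrix.mul_assoc]

end Vectorization

/-- The differential of `(A, B, P, Q, R) ↦ AᵀPA − AᵀPB(R + BᵀPB)⁻¹BᵀPA + Q` at `(a, b, p, q, r)` in
the direction `(A', B', P', Q', R')`. -/
noncomputable def dareDifferential {n m : ℕ} (a : Matrix (Fin n) (Fin n) ℝ)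
    (b : Matrix (Fin n) (Fin m) ℝ) (p : Matrix (Fin n) (Fin n) ℝ) (r : Matrix (Fin m) (Fin m) ℝ)
    (A' : Matrix (Fin n) (Fin n) ℝ) (B' : Matrix (Fin n) (Fin m) ℝ)
    (P' Q' : Matrix (Fin n) (Fin n) ℝ) (R' : Matrix (Fin m) (Fin m) ℝ) : Matrix (Fin n) (Fin n) ℝ :=
  A'ᵀ * p * a + aᵀ * P' * a + aᵀ * p * A' + Q'
    - (A'ᵀ * p * b + aᵀ * P' * b + aᵀ * p * B') * dareM₂ b p r * (bᵀ * p * a)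
    + aᵀ * p * b * dareM₂ b p r * (R' + B'ᵀ * p * b + bᵀ * P' * b + bᵀ * p * B')
        * dareM₂ b p r * (bᵀ * p * a)
    - aᵀ * p * b * dareM₂ b p r * (B'ᵀ * p * a + bᵀ * P' * a + bᵀ * p * A')

theorem HasMatrixDerivAt.dare_rhs {n m : ℕ} {A Q P : ℝ → Matrix (Fin n) (Fin n) ℝ}
    {B : ℝ → Matrix (Fin n) (Fin m) ℝ} {R : ℝ → Matrix (Fin m) (Fin m) ℝ} {t : ℝ}
    {A' Q' P' : Matrix (Fin n) (Fin n) ℝ} {B' : Matrix (Fin n) (Fin m) ℝ}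
    {R' : Matrix (Fin m) (Fin m) ℝ} (hA : HasMatrixDerivAt A A' t) (hB : HasMatrixDerivAt B B' t)
    (hQ : HasMatrixDerivAt Q Q' t) (hR : HasMatrixDerivAt R R' t) (hP : HasMatrixDerivAt P P' t)
    (hinv : ∀ᶠ τ in 𝓝 t, IsUnit (R τ + (B τ)ᵀ * P τ * B τ)) :
    HasMatrixDerivAt
      (fun τ => (A τ)ᵀ * P τ * A τ -
        (A τ)ᵀ * P τ * B τ * (R τ + (B τ)ᵀ * P τ * B τ)⁻¹ * ((B τ)ᵀ * P τ * A τ) + Q τ)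
      (dareDifferential (A t) (B t) (P t) (R t) A' B' P' Q' R') t := by
  have hM₂ := (hR.add ((hB.transpose.mul hP).mul hB)).inv hinv
  convert (((hA.transpose.mul hP).mul hA).sub ((((hA.transpose.mul hP).mul hB).mul hM₂).mul
    ((hB.transpose.mul hP).mul hA))).add hQ using 1
  simp only [dareDifferential, dareM₂, Matrix.add_mul, Matrix.mul_add, Matrix.neg_mul,
    Matrix.mul_neg, Matrix.mul_assoc]
  abel

theorem dareZ₁_mulVec_vecM_eq_of_eq_dareDifferential {n m : ℕ} {a p : Matrix (Fin n) (Fin n) ℝ}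
    {b : Matrix (Fin n) (Fin m) ℝ} {r : Matrix (Fin m) (Fin m) ℝ}
    {A' P' Q' : Matrix (Fin n) (Fin n) ℝ} {B' : Matrix (Fin n) (Fin m) ℝ}
    {R' : Matrix (Fin m) (Fin m) ℝ} (hp : pᵀ = p) (hr : rᵀ = r)
    (hP' : P' = dareDifferential a b p r A' B' P' Q' R') :
    dareZ₁ a b p r *ᵥ vecM P' = dareZ₂ a b p r *ᵥ vecM A' + dareZ₃ a b p r *ᵥ vecM B'
      + dareZ₄ n *ᵥ vecM Q' + dareZ₅ a b p r *ᵥ vecM R' := by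
  rw [dareZ₁_mulVec_vecM hp hr, dareZ₂_mulVec_vecM hp hr, dareZ₃_mulVec_vecM hp hr, dareZ₄,
    one_mulVec, dareZ₅_mulVec_vecM hp hr]
  simp only [vecM_eq_vec, ← vec_add, vec_inj]
  nth_rw 1 [hP']
  simp only [dareDifferential, dareM₁, Matrix.add_mul, Matrix.mul_add, Matrix.sub_mul,
    Matrix.mul_sub, Matrix.mul_one, Matrix.mul_assoc]
  abel

theorem dare_derivative_general {n m : ℕ}
    (A : ℝ → Matrix (Fin n) (Fin n) ℝ) (B : ℝ → Matrix (Fin n) (Fin m) ℝ)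
    (Q : ℝ → Matrix (Fin n) (Fin n) ℝ) (R : ℝ → Matrix (Fin m) (Fin m) ℝ)
    (P : ℝ → Matrix (Fin n) (Fin n) ℝ) (t : ℝ)
    (A' : Matrix (Fin n) (Fin n) ℝ) (B' : Matrix (Fin n) (Fin m) ℝ)
    (Q' : Matrix (Fin n) (Fin n) ℝ) (R' : Matrix (Fin m) (Fin m) ℝ)
    (P' : Matrix (Fin n) (Fin n) ℝ)
    (hA : ∀ i j, HasDerivAt (fun τ => A τ i j) (A' i j) t)
    (hB : ∀ i j, HasDerivAt (fun τ => B τ i j) (B' i j) t)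
    (hQ : ∀ i j, HasDerivAt (fun τ => Q τ i j) (Q' i j) t)
    (hR : ∀ i j, HasDerivAt (fun τ => R τ i j) (R' i j) t)
    (hP : ∀ i j, HasDerivAt (fun τ => P τ i j) (P' i j) t)
    (hRsymm : ∀ τ, (R τ).IsSymm)
    (hPsymm : ∀ τ, (P τ).IsSymm)
    (hinv : ∀ᶠ τ in 𝓝 t, IsUnit (R τ + (B τ)ᵀ * P τ * B τ))
    (hDARE : ∀ᶠ τ in 𝓝 t,
      P τ = (A τ)ᵀ * P τ * A τ -
          (A τ)ᵀ * P τ * B τ * (R τ + (B τ)ᵀ * P τ * B τ)⁻¹ * ((B τ)ᵀ * P τ * A τ)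
        + Q τ) :
    (dareZ₁ (A t) (B t) (P t) (R t)).mulVec (vecM P') =
      (dareZ₂ (A t) (B t) (P t) (R t)).mulVec (vecM A')
      + (dareZ₃ (A t) (B t) (P t) (R t)).mulVec (vecM B')
      + (dareZ₄ n).mulVec (vecM Q')
      + (dareZ₅ (A t) (B t) (P t) (R t)).mulVec (vecM R') ∧
    (IsUnit (dareZ₁ (A t) (B t) (P t) (R t)) →
      vecM P' =
        (dareZ₁ (A t) (B t) (P t) (R t))⁻¹.mulVec
          ((dareZ₂ (A t) (B t) (P t) (R t)).mulVec (vecM A')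
            + (dareZ₃ (A t) (B t) (P t) (R t)).mulVec (vecM B')
            + (dareZ₄ n).mulVec (vecM Q')
            + (dareZ₅ (A t) (B t) (P t) (R t)).mulVec (vecM R'))) := by
  have hP'_eq : P' = dareDifferential (A t) (B t) (P t) (R t) A' B' P' Q' R' :=
    HasMatrixDerivAt.unique hP (HasMatrixDerivAt.dare_rhs hA hB hQ hR hP hinv) hDARE
  have hZ := dareZ₁_mulVec_vecM_eq_of_eq_dareDifferential (hPsymm t) (hRsymm t) hP'_eq
  refine ⟨hZ, fun hZ₁ => ?_⟩
  rw [← hZ, mulVec_mulVec, nonsing_inv_mul _ ((isUnit_iff_isUnit_det _).mp hZ₁), one_mulVec]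

theorem dare_derivative {n m : ℕ}
    (A : ℝ → Matrix (Fin n) (Fin n) ℝ) (B : ℝ → Matrix (Fin n) (Fin m) ℝ)
    (Q : ℝ → Matrix (Fin n) (Fin n) ℝ) (R : ℝ → Matrix (Fin m) (Fin m) ℝ)
    (P : ℝ → Matrix (Fin n) (Fin n) ℝ) (t : ℝ)
    (A' : Matrix (Fin n) (Fin n) ℝ) (B' : Matrix (Fin n) (Fin m) ℝ)
    (Q' : Matrix (Fin n) (Fin n) ℝ) (R' : Matrix (Fin m) (Fin m) ℝ)
    (P' : Matrix (Fin n) (Fin n) ℝ)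
    (hA : ∀ i j, HasDerivAt (fun τ => A τ i j) (A' i j) t)
    (hB : ∀ i j, HasDerivAt (fun τ => B τ i j) (B' i j) t)
    (hQ : ∀ i j, HasDerivAt (fun τ => Q τ i j) (Q' i j) t)
    (hR : ∀ i j, HasDerivAt (fun τ => R τ i j) (R' i j) t)
    (hP : ∀ i j, HasDerivAt (fun τ => P τ i j) (P' i j) t)
    (hQsymm : ∀ τ, (Q τ).IsSymm) (hRsymm : ∀ τ, (R τ).IsSymm)
    (hPsymm : ∀ τ, (P τ).IsSymm)
    (hinv : ∀ᶠ τ in 𝓝 t, IsUnit (R τ + (B τ)ᵀ * P τ * B τ))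
    (hDARE : ∀ᶠ τ in 𝓝 t,
      P τ = (A τ)ᵀ * P τ * A τ -
          (A τ)ᵀ * P τ * B τ * (R τ + (B τ)ᵀ * P τ * B τ)⁻¹ * ((B τ)ᵀ * P τ * A τ)
        + Q τ) :
    (dareZ₁ (A t) (B t) (P t) (R t)).mulVec (vecM P') =
      (dareZ₂ (A t) (B t) (P t) (R t)).mulVec (vecM A')
      + (dareZ₃ (A t) (B t) (P t) (R t)).mulVec (vecM B')
      + (dareZ₄ n).mulVec (vecM Q')
      + (dareZ₅ (A t) (B t) (P t) (R t)).mulVec (vecM R') ∧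
    (IsUnit (dareZ₁ (A t) (B t) (P t) (R t)) →
      vecM P' =
        (dareZ₁ (A t) (B t) (P t) (R t))⁻¹.mulVec
          ((dareZ₂ (A t) (B t) (P t) (R t)).mulVec (vecM A')
            + (dareZ₃ (A t) (B t) (P t) (R t)).mulVec (vecM B')
            + (dareZ₄ n).mulVec (vecM Q')
            + (dareZ₅ (A t) (B t) (P t) (R t)).mulVec (vecM R'))) :=
  dare_derivative_general A B Q R P t A' B' Q' R' P' hA hB hQ hR hP hRsymm hPsymm hinv hDARE
end
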